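/- Let X and Y be Banach spaces. If u ∈ X ⊗̂_π Y with u = x ⊗ y nonzero, and u also equals x** ⊗ y** for some x** ∈ X**, y** ∈ Y** (as elements of (X ⊗̂_π Y)**), then x** ∈ span{x} and y** ∈ span{y}. -/

import Mathlib

open Filter Topology NormedSpace

noncomputable section

variable (X Y : Type*) [NormedAddCommGroup X] [NormedSpace ℝ X] [CompleteSpace X]
  [NormedAddCommGroup Y] [NormedSpace ℝ Y] [CompleteSpace Y]

/-- The space `B(X × Y)` of bounded bilinear forms on `X × Y`. -/
abbrev Bil := X →L[ℝ] Y →L[ℝ] ℝ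

instance instNormedAddCommGroupBil : NormedAddCommGroup (Bil X Y) := inferInstance

instance instNormedSpaceBil : NormedSpace ℝ (Bil X Y) := inferInstance

/-- The elementary tensor `x ⊗ y`, viewed as a functional on bounded bilinear
forms: `⟨x ⊗ y, B⟩ = B x y`. -/
def elemTensor (x : X) (y : Y) : StrongDual ℝ (Bil X Y) :=
  (ContinuousLinearMap.apply ℝ ℝ y).comp (ContinuousLinearMap.apply ℝ (Y →L[ℝ] ℝ) x)

/-- The projective tensor product `X ⊗̂_π Y`: the closed linear span of the elementary
tensors inside `B(X × Y)*` (the induced dual norm is the projective norm, and the weak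
topology of `X ⊗̂_π Y` is the topology `σ(X ⊗̂_π Y, B(X × Y))` inherited from the
weak-* topology of `B(X × Y)*`). -/
def ptp : Submodule ℝ (StrongDual ℝ (Bil X Y)) :=
  (Submodule.span ℝ {u | ∃ x y, u = elemTensor X Y x y}).topologicalClosure

/-- The approximation property: for every `ε > 0` and every compact set `K` there is
a finite-rank operator `T` with `‖T x - x‖ ≤ ε` on `K`. -/
def HasAP (Z : Type*) [NormedAddCommGroup Z] [NormedSpace ℝ Z] : Prop :=
  ∀ ε : ℝ, 0 < ε → ∀ K : Set Z, IsCompact K →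
    ∃ T : Z →L[ℝ] Z, FiniteDimensional ℝ (LinearMap.range (T : Z →ₗ[ℝ] Z)) ∧
      ∀ x ∈ K, ‖T x - x‖ ≤ ε

/-- The tensor `x** ⊗ y**` of elements of the biduals, as an element of
`(X ⊗̂_π Y)** = B(X × Y)*`, acting by `⟨x** ⊗ y**, B⟩ = x**(x ↦ y**(B x))`. -/
def biElemTensor (x : StrongDual ℝ (StrongDual ℝ X)) (y : StrongDual ℝ (StrongDual ℝ Y)) :
    StrongDual ℝ (Bil X Y) :=
  x.comp (ContinuousLinearMap.compL ℝ X (Y →L[ℝ] ℝ) ℝ y)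

/-!
Testing `x ⊗ y = x** ⊗ y**` on the rank-one forms `(a, b) ↦ f a * g b` gives
`f x * g y = x** f * y** g` for all functionals `f`, `g`. Fixing `g₀` with `g₀ y ≠ 0` forces
`y** g₀ ≠ 0` (as `x ≠ 0`), and then `x** = (g₀ y / y** g₀) • x`; symmetrically for `y**`.
A form `B` with `B x y ≠ 0` supplies functionals `B · y` and `B x` not vanishing at `x` and `y`.
-/

section ProductFunctionals

variable {α β K : Type*} [Field K]

theorem exists_eq_smul_of_forall_mul_eq_mul {u u' : α → K} {v v' : β → K}
    (h : ∀ a b, u a * v b = u' a * v' b) (hu : u ≠ 0) (hv : v ≠ 0) : ∃ c : K, u' = c • u := by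
  obtain ⟨b₀, hb₀⟩ := Function.ne_iff.mp hv
  have hv'b₀ : v' b₀ ≠ 0 := by
    intro hzero
    refine hu (funext fun a => ?_)
    have := h a b₀
    rw [hzero, mul_zero] at this
    exact (mul_eq_zero.mp this).resolve_right hb₀
  refine ⟨v b₀ / v' b₀, funext fun a => ?_⟩
  rw [Pi.smul_apply, smul_eq_mul, div_mul_eq_mul_div, eq_div_iff hv'b₀, mul_comm (v b₀), h]

variable {E : Type*} [TopologicalSpace K] [IsTopologicalRing K]
  [AddCommGroup E] [TopologicalSpace E] [Module K E]

theorem mem_span_singleton_of_forall_mul_eq_mul {u u' : E →L[K] K}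
    {v v' : β → K} (h : ∀ a b, u a * v b = u' a * v' b) (hu : u ≠ 0) (hv : v ≠ 0) :
    u' ∈ Submodule.span K {u} := by
  obtain ⟨c, hc⟩ := exists_eq_smul_of_forall_mul_eq_mul h (DFunLike.coe_injective.ne hu) hv
  exact Submodule.mem_span_singleton.mpr ⟨c, DFunLike.coe_injective hc.symm⟩

end ProductFunctionals

omit [CompleteSpace X] [CompleteSpace Y] in
@[simp]
theorem elemTensor_apply (x : X) (y : Y) (B : Bil X Y) : elemTensor X Y x y B = B x y := rfl

omit [CompleteSpace X] [CompleteSpace Y] in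
@[simp]
theorem biElemTensor_smulRight (x' : StrongDual ℝ (StrongDual ℝ X))
    (y' : StrongDual ℝ (StrongDual ℝ Y)) (f : StrongDual ℝ X) (g : StrongDual ℝ Y) :
    biElemTensor X Y x' y' (f.smulRight g) = x' f * y' g := by
  have : ContinuousLinearMap.compL ℝ X (Y →L[ℝ] ℝ) ℝ y' (f.smulRight g) = y' g • f := by
    ext z
    simp [mul_comm]
  simp [biElemTensor, this, mul_comm]

/-- if a nonzero `u = x ⊗ y ∈ X ⊗̂_π Y` also equals `x** ⊗ y**` as an
element of `(X ⊗̂_π Y)**`, then `x** ∈ span{x}` and `y** ∈ span{y}` (under the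
canonical embeddings into the biduals). -/
theorem bidual_tensor_eq_span (x : X) (y : Y)
    (x' : StrongDual ℝ (StrongDual ℝ X)) (y' : StrongDual ℝ (StrongDual ℝ Y))
    (hne : elemTensor X Y x y ≠ 0)
    (heq : elemTensor X Y x y = biElemTensor X Y x' y') :
    x' ∈ Submodule.span ℝ {NormedSpace.inclusionInDoubleDual ℝ X x} ∧
    y' ∈ Submodule.span ℝ {NormedSpace.inclusionInDoubleDual ℝ Y y} := by
  obtain ⟨B, hB⟩ : ∃ B : Bil X Y, B x y ≠ 0 := by
    by_contra! hzero
    exact hne (ContinuousLinearMap.ext hzero)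
  have hmul (f : StrongDual ℝ X) (g : StrongDual ℝ Y) : f x * g y = x' f * y' g := by
    simpa using congr($heq (f.smulRight g))
  have hx : NormedSpace.inclusionInDoubleDual ℝ X x ≠ 0 :=
    fun h => hB (by simpa using congr($h (B.flip y)))
  have hy : NormedSpace.inclusionInDoubleDual ℝ Y y ≠ 0 :=
    fun h => hB (by simpa using congr($h (B x)))
  exact ⟨mem_span_singleton_of_forall_mul_eq_mul hmul hx (DFunLike.coe_injective.ne hy),
    mem_span_singleton_of_forall_mul_eq_mul (v' := x') (fun g f => by
      rw [dual_def, dual_def, mul_comm, hmul, mul_comm]) hy (DFunLike.coe_injective.ne hx)⟩
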